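/- (Identical successors property) Let P ⊆ 𝒫 be finite, k ≥ 2, and δ ∈ D^P_k(K45_nD) (i.e., δ is satisfiable in some Kripke model all of whose relations are transitive and Euclidean). Then for every l with 1 ≤ l < k, every nonempty B ⊆ 𝒜, and every η ∈ R_B(δ): {χ^{↓l} : χ ∈ R_B(δ)} = {χ^{↓(l−1)} : χ ∈ R_B(η)}. -/

import Mathlib

/-!
Common framework: multi-agent epistemic modal logic with distributed knowledge.
Agents are `Fin n`, atoms are natural numbers.
-/

namespace DKLogic

/-- Formulas of the language `L_D`: atoms, negation, conjunction, disjunction and the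
distributed-knowledge modality `D_B` for nonempty sets `B` of agents (together with the
constants `⊤`/`⊥`, which the paper uses as the empty conjunction/disjunction). -/
inductive Formula (n : ℕ) : Type
  | top : Formula n
  | bot : Formula n
  | atom : ℕ → Formula n
  | neg : Formula n → Formula n
  | and : Formula n → Formula n → Formula n
  | or : Formula n → Formula n → Formula n
  | D : {B : Finset (Fin n) // B.Nonempty} → Formula n → Formula n

namespace Formula

/-- Modal depth of a formula. -/
def depth {n : ℕ} : Formula n → ℕ
  | top => 0
  | bot => 0
  | atom _ => 0
  | neg φ => depth φ
  | and φ ψ => max (depth φ) (depth ψ)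
  | or φ ψ => max (depth φ) (depth ψ)
  | D _ φ => depth φ + 1

/-- The atoms occurring in a formula. -/
def atoms {n : ℕ} : Formula n → Finset ℕ
  | top => ∅
  | bot => ∅
  | atom q => {q}
  | neg φ => atoms φ
  | and φ ψ => atoms φ ∪ atoms ψ
  | or φ ψ => atoms φ ∪ atoms ψ
  | D _ φ => atoms φ

end Formula

/-- A Kripke model over world type `W` with `n` agents. -/
structure KModel (n : ℕ) (W : Type) where
  R : Fin n → W → W → Prop
  V : W → Set ℕ

/-- The distributed accessibility relation `R_B = ⋂_{i ∈ B} R_i`. -/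
def KModel.RB {n : ℕ} {W : Type} (M : KModel n W) (B : Finset (Fin n)) (s t : W) : Prop :=
  ∀ i ∈ B, M.R i s t

/-- Satisfaction. -/
def Sat {n : ℕ} {W : Type} (M : KModel n W) : W → Formula n → Prop
  | _, .top => True
  | _, .bot => False
  | s, .atom q => q ∈ M.V s
  | s, .neg φ => ¬ Sat M s φ
  | s, .and φ ψ => Sat M s φ ∧ Sat M s ψ
  | s, .or φ ψ => Sat M s φ ∨ Sat M s ψ
  | s, .D B φ => ∀ t : W, M.RB B.1 s t → Sat M t φ

/-- Seriality of a relation. -/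
def Serial {W : Type} (R : W → W → Prop) : Prop := ∀ x, ∃ y, R x y

/-- Euclideanness of a relation. -/
def Euclidean {W : Type} (R : W → W → Prop) : Prop := ∀ x y z, R x y → R x z → R y z

/-- The six modal systems. -/
inductive MSys : Type
  | K | D | T | K45 | KD45 | S5

/-- `L`-models: frame conditions on each accessibility relation for each system. -/
def IsModel {n : ℕ} {W : Type} : MSys → KModel n W → Prop
  | .K, _ => True
  | .D, M => ∀ i, Serial (M.R i)
  | .T, M => ∀ i, Reflexive (M.R i)
  | .K45, M => ∀ i, Transitive (M.R i) ∧ Euclidean (M.R i)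
  | .KD45, M => ∀ i, Serial (M.R i) ∧ Transitive (M.R i) ∧ Euclidean (M.R i)
  | .S5, M => ∀ i, Reflexive (M.R i) ∧ Transitive (M.R i) ∧ Euclidean (M.R i)

/-- Semantic consequence over `L`-models. -/
def Entails {n : ℕ} (L : MSys) (φ ψ : Formula n) : Prop :=
  ∀ (W : Type) (M : KModel n W), IsModel L M → ∀ s : W, Sat M s φ → Sat M s ψ

/-- Semantic equivalence over `L`-models. -/
def EquivL {n : ℕ} (L : MSys) (φ ψ : Formula n) : Prop :=
  Entails L φ ψ ∧ Entails L ψ φ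

/-- `L`-satisfiability. -/
def SatL {n : ℕ} (L : MSys) (φ : Formula n) : Prop :=
  ∃ (W : Type) (M : KModel n W) (s : W), IsModel L M ∧ Sat M s φ

/-- Collective `p`-bisimulation between two pointed models. -/
def CollPBisim {n : ℕ} {W W' : Type} (M : KModel n W) (s : W) (M' : KModel n W') (s' : W')
    (p : ℕ) : Prop :=
  ∃ ρ : W → W' → Prop, ρ s s' ∧
    ∀ u u', ρ u u' →
      ((∀ q : ℕ, q ≠ p → (q ∈ M.V u ↔ q ∈ M'.V u')) ∧
       (∀ B : Finset (Fin n), B.Nonempty → ∀ v, M.RB B u v → ∃ v', M'.RB B u' v' ∧ ρ v v') ∧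
       (∀ B : Finset (Fin n), B.Nonempty → ∀ v', M'.RB B u' v' → ∃ v, M.RB B u v ∧ ρ v v'))

/-- `ψ` is a result of forgetting `p` in `φ` in system `L`
(written `dforget_L(φ,p) ≡_L ψ` in the paper). -/
def IsForget {n : ℕ} (L : MSys) (φ : Formula n) (p : ℕ) (ψ : Formula n) : Prop :=
  ψ.atoms ⊆ φ.atoms.erase p ∧
  (∀ (W W' : Type) (M : KModel n W) (M' : KModel n W') (s : W) (s' : W'),
      IsModel L M → IsModel L M' → Sat M s φ → CollPBisim M s M' s' p → Sat M' s' ψ) ∧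
  (∀ (W' : Type) (M' : KModel n W') (s' : W'),
      IsModel L M' → Sat M' s' ψ →
      ∃ (W : Type) (M : KModel n W) (s : W), IsModel L M ∧ Sat M s φ ∧ CollPBisim M s M' s' p)

/-- `L` is closed under forgetting: `dforget_L(φ,p)` exists (as an `L`-satisfiable formula)
for every `L`-satisfiable `φ` and every atom `p`. -/
def ClosedUnderForgetting {n : ℕ} (L : MSys) : Prop :=
  ∀ (φ : Formula n) (p : ℕ), SatL L φ → ∃ ψ : Formula n, SatL L ψ ∧ IsForget L φ p ψ

/-- `ψ` is a uniform interpolant of `φ` in `L` over `P \ {p}`. -/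
def IsUI {n : ℕ} (L : MSys) (P : Finset ℕ) (p : ℕ) (φ ψ : Formula n) : Prop :=
  SatL L ψ ∧ ψ.atoms ⊆ P.erase p ∧
  ∀ χ : Formula n, p ∉ χ.atoms → (Entails L φ χ ↔ Entails L ψ χ)

/-- The uniform interpolation property for the system `L`. -/
def HasUIP {n : ℕ} (L : MSys) : Prop :=
  ∀ (P : Finset ℕ) (p : ℕ) (φ : Formula n),
    p ∈ P → φ.atoms ⊆ P → SatL L φ → ∃ ψ : Formula n, IsUI L P p φ ψ

/-! ### Canonical formulas -/

/-- Big conjunction of a list of formulas (`⊤` for the empty list). -/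
def bigAnd {n : ℕ} : List (Formula n) → Formula n
  | [] => .top
  | φ :: l => .and φ (bigAnd l)

/-- Big disjunction of a list of formulas (`⊥` for the empty list). -/
def bigOr {n : ℕ} : List (Formula n) → Formula n
  | [] => .bot
  | φ :: l => .or φ (bigOr l)

/-- An injective numerical code of formulas, used to fix a canonical ordering. -/
def fcode {n : ℕ} : Formula n → ℕ
  | .top => Nat.pair 0 0
  | .bot => Nat.pair 1 0
  | .atom q => Nat.pair 2 q
  | .neg φ => Nat.pair 3 (fcode φ)
  | .and φ ψ => Nat.pair 4 (Nat.pair (fcode φ) (fcode ψ))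
  | .or φ ψ => Nat.pair 5 (Nat.pair (fcode φ) (fcode ψ))
  | .D B φ => Nat.pair 6 (Nat.pair (B.1.sum fun i => 2 ^ (i : ℕ)) (fcode φ))

/-- Insert a formula into a strictly `fcode`-sorted list (dropping duplicates). -/
def insertF {n : ℕ} (φ : Formula n) : List (Formula n) → List (Formula n)
  | [] => [φ]
  | ψ :: l =>
      if fcode φ < fcode ψ then φ :: ψ :: l
      else if fcode φ = fcode ψ then ψ :: l
      else ψ :: insertF φ l

/-- The canonical (sorted, duplicate-free) list representing the set of formulas in `l`. -/
def normList {n : ℕ} (l : List (Formula n)) : List (Formula n) := l.foldr insertF []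

/-- The minterm of `P` that is positive exactly on `S`. -/
def minterm {n : ℕ} (P S : Finset ℕ) : Formula n :=
  bigAnd ((P.sort (· ≤ ·)).map fun q =>
    if q ∈ S then Formula.atom q else Formula.neg (Formula.atom q))

/-- The subset of `Fin n` whose characteristic bits are those of `m`. -/
def natToFinset (n m : ℕ) : Finset (Fin n) :=
  Finset.univ.filter fun i => m.testBit (i : ℕ)

/-- A canonical enumeration of all nonempty subsets of the agent set. -/
def neSubsets (n : ℕ) : List {B : Finset (Fin n) // B.Nonempty} :=
  ((List.range (2 ^ n)).map (natToFinset n)).filterMap fun B =>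
    if h : B.Nonempty then some ⟨B, h⟩ else none

/-- `∇_B Φ = D_B (⋁Φ) ∧ ⋀_{φ ∈ Φ} ¬ D_B ¬ φ`. -/
def nabla {n : ℕ} (B : {B : Finset (Fin n) // B.Nonempty}) (Φ : List (Formula n)) : Formula n :=
  Formula.and (Formula.D B (bigOr Φ))
    (bigAnd (Φ.map fun φ => Formula.neg (Formula.D B (Formula.neg φ))))

/-- Underlying data of a d-canonical formula: a set of (positive) atoms together with,
for every set `B` of agents, a list of successor data. -/
inductive CData (n : ℕ) : Type
  | mk (S : Finset ℕ) (succ : Finset (Fin n) → List (CData n)) : CData n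

/-- The positive-atom component. -/
def CData.S {n : ℕ} : CData n → Finset ℕ
  | mk S _ => S

/-- The `B`-successor data. -/
def CData.succ {n : ℕ} : CData n → Finset (Fin n) → List (CData n)
  | mk _ f => f

/-- The d-canonical formula of depth `k` over `P` determined by the data `d`:
`δ_0 ∧ ⋀_{B} ∇_B Φ_B`. -/
def toFormula {n : ℕ} (P : Finset ℕ) : ℕ → CData n → Formula n
  | 0, d => minterm P (d.S ∩ P)
  | (k+1), d =>
      Formula.and (minterm P (d.S ∩ P))
        (bigAnd ((neSubsets n).map fun B =>
          nabla B (normList ((d.succ B.1).map fun c => toFormula P k c))))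

/-- `D^P_k`: the set of d-canonical formulas of depth `k` over `P`. -/
def DP {n : ℕ} (P : Finset ℕ) (k : ℕ) : Set (Formula n) := Set.range (toFormula P k)

/-- `R_B(δ)` for `δ` the level-`k` canonical formula with data `d`:
the set of `B`-successor canonical formulas (of level `k - 1`). -/
def RBset {n : ℕ} (P : Finset ℕ) (k : ℕ) (d : CData n) (B : Finset (Fin n)) :
    Set (Formula n) :=
  {φ | ∃ c ∈ d.succ B, φ = toFormula P (k - 1) c}

/-- One pruning step `δ ↦ δ^↓` on data (first argument: the level of the input). -/
def downD {n : ℕ} : ℕ → CData n → CData n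
  | 0, d => d
  | 1, d => CData.mk d.S (fun _ => [])
  | (k+2), d => CData.mk d.S (fun B => (d.succ B).map fun c => downD (k+1) c)

/-- `l`-fold pruning `δ ↦ δ^{↓l}` on data (first argument: the level of the input). -/
def downIter {n : ℕ} : ℕ → ℕ → CData n → CData n
  | _, 0, d => d
  | k, (l+1), d => downIter (k-1) l (downD k d)

/-- Truncation `δ ↦ δ^{↑l}` on data (first argument: the level of the input). -/
def upD {n : ℕ} : ℕ → ℕ → CData n → CData n
  | _, 0, d => CData.mk d.S (fun _ => [])
  | 0, (_+1), d => d
  | (k+1), (l+1), d => CData.mk d.S (fun B => (d.succ B).map fun c => upD k l c)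

/-- The canonical formula `δ` of level `k` with data `d`. -/
def cf {n : ℕ} (P : Finset ℕ) (k : ℕ) (d : CData n) : Formula n := toFormula P k d

/-- `δ^{↓l}` (a canonical formula of level `k - l`). -/
def cfDown {n : ℕ} (P : Finset ℕ) (k l : ℕ) (d : CData n) : Formula n :=
  toFormula P (k - l) (downIter k l d)

/-- `δ^{↑l}` (a canonical formula of level `min k l`). -/
def cfUp {n : ℕ} (P : Finset ℕ) (k l : ℕ) (d : CData n) : Formula n :=
  toFormula P (min k l) (upD k l d)

/-- Literal elimination: `φ^p` replaces every occurrence of `¬p` by `⊤` and subsequently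
every remaining occurrence of `p` by `⊤`. -/
def elim {n : ℕ} (p : ℕ) : Formula n → Formula n
  | .top => .top
  | .bot => .bot
  | .atom q => if q = p then .top else .atom q
  | .neg (.atom q) => if q = p then .top else .neg (.atom q)
  | .neg φ => .neg (elim p φ)
  | .and φ ψ => .and (elim p φ) (elim p ψ)
  | .or φ ψ => .or (elim p φ) (elim p ψ)
  | .D B φ => .D B (elim p φ)


/-!
A world determines its canonical formula of each level: the minterm is read off the valuation
and the `B`-successor set is the set of level-`(m-1)` formulas of its `B`-successors, so two
canonical formulas of the same level true at one world coincide; pruning preserves truth.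
If `s ⊨ δ` and `t ⊨ η` with `η ∈ R_B(δ)` and `s R_B t`, then in a `K45` model the
`R_B`-successors of `s` and of `t` are the same worlds (Euclideanness one way, transitivity the
other), so both sides are the level-`(k-1-l)` formulas true at these worlds.
-/

section Coding

variable {n : ℕ}

theorem sum_two_pow_val_eq_sum_map (B : Finset (Fin n)) :
    ∑ i ∈ B, 2 ^ (i : ℕ) = ∑ j ∈ B.map Fin.valEmbedding, 2 ^ j := by
  simp [Finset.sum_map]

theorem sum_two_pow_val_injective :
    Function.Injective fun B : Finset (Fin n) => ∑ i ∈ B, 2 ^ (i : ℕ) := by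
  intro B B' (h : ∑ i ∈ B, 2 ^ (i : ℕ) = ∑ i ∈ B', 2 ^ (i : ℕ))
  rw [sum_two_pow_val_eq_sum_map, sum_two_pow_val_eq_sum_map] at h
  apply Finset.map_injective Fin.valEmbedding
  simpa only [Finset.toFinset_bitIndices_sum_two_pow] using
    congrArg (fun m => m.bitIndices.toFinset) h

theorem fcode_injective : Function.Injective (fcode (n := n)) := by
  intro φ ψ h
  induction φ generalizing ψ <;> cases ψ <;>
    simp only [fcode, Nat.pair_eq_pair, reduceCtorEq, false_and] at h ⊢
  all_goals grind [Subtype.ext_iff, sum_two_pow_val_injective.eq_iff]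

theorem mem_neSubsets {B : Finset (Fin n)} (hB : B.Nonempty) : ⟨B, hB⟩ ∈ neSubsets n := by
  simp only [neSubsets, List.mem_filterMap, List.mem_map, List.mem_range]
  refine ⟨B, ⟨∑ i ∈ B, 2 ^ (i : ℕ), ?_, ?_⟩, by simp [hB]⟩
  · rw [sum_two_pow_val_eq_sum_map]
    exact Nat.geomSum_lt le_rfl (by simp)
  · ext i
    rw [natToFinset, Finset.mem_filter, ← Nat.mem_bitIndices, ← List.mem_toFinset,
      sum_two_pow_val_eq_sum_map, Finset.toFinset_bitIndices_sum_two_pow]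
    simp [Fin.val_inj]

theorem mem_insertF {φ ψ : Formula n} {L : List (Formula n)} :
    ψ ∈ insertF φ L ↔ ψ = φ ∨ ψ ∈ L := by
  induction L with
  | nil => simp [insertF]
  | cons χ L ih =>
    rw [insertF]
    split_ifs with hlt heq
    · simp
    · simp [fcode_injective heq]
    · simp only [List.mem_cons, ih]
      tauto

theorem pairwise_insertF {φ : Formula n} {L : List (Formula n)}
    (hL : L.Pairwise (fcode · < fcode ·)) : (insertF φ L).Pairwise (fcode · < fcode ·) := by
  induction L with
  | nil => simp [insertF]
  | cons χ L ih =>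
    obtain ⟨hχ, hL⟩ := List.pairwise_cons.1 hL
    rw [insertF]
    split_ifs with hlt heq
    · exact List.pairwise_cons.2 ⟨by grind, hL.cons hχ⟩
    · exact hL.cons hχ
    · exact List.pairwise_cons.2 ⟨by grind [mem_insertF], ih hL⟩

theorem mem_normList {ψ : Formula n} {L : List (Formula n)} : ψ ∈ normList L ↔ ψ ∈ L := by
  induction L with
  | nil => simp [normList]
  | cons φ L ih => simp [normList, mem_insertF, ← ih]

theorem pairwise_normList (L : List (Formula n)) : (normList L).Pairwise (fcode · < fcode ·) := by
  induction L with
  | nil => simp [normList]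
  | cons φ L ih => exact pairwise_insertF ih

theorem normList_congr {L L' : List (Formula n)} (h : ∀ ψ, ψ ∈ L ↔ ψ ∈ L') :
    normList L = normList L' := by
  apply (List.map_injective_iff.2 fcode_injective)
  apply List.SortedLT.eq_of_mem_iff
  · exact List.sortedLT_iff_pairwise.2 (List.pairwise_map.2 (pairwise_normList L))
  · exact List.sortedLT_iff_pairwise.2 (List.pairwise_map.2 (pairwise_normList L'))
  · simp [mem_normList, h]

end Coding

section Semantics

variable {n : ℕ} {W : Type} {M : KModel n W} {s : W}

theorem sat_bigAnd {L : List (Formula n)} : Sat M s (bigAnd L) ↔ ∀ φ ∈ L, Sat M s φ := by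
  induction L with
  | nil => simp [bigAnd, Sat]
  | cons φ L ih => simp [bigAnd, Sat, ih]

theorem sat_bigOr {L : List (Formula n)} : Sat M s (bigOr L) ↔ ∃ φ ∈ L, Sat M s φ := by
  induction L with
  | nil => simp [bigOr, Sat]
  | cons φ L ih => simp [bigOr, Sat, ih]

theorem sat_minterm {P S : Finset ℕ} :
    Sat M s (minterm (n := n) P S) ↔ ∀ q ∈ P, (q ∈ S ↔ q ∈ M.V s) := by
  rw [minterm, sat_bigAnd, List.forall_mem_map]
  simp only [Finset.mem_sort]
  refine forall₂_congr fun q _ => ?_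
  split_ifs with hq <;> simp [Sat, hq]

theorem eq_of_sat_minterm {P S S' : Finset ℕ} (hS : S ⊆ P) (hS' : S' ⊆ P)
    (h : Sat M s (minterm (n := n) P S)) (h' : Sat M s (minterm (n := n) P S')) : S = S' := by
  rw [sat_minterm] at h h'
  ext q
  by_cases hq : q ∈ P
  · rw [h q hq, h' q hq]
  · exact iff_of_false (fun hqS => hq (hS hqS)) (fun hqS => hq (hS' hqS))

theorem sat_nabla {B : {B : Finset (Fin n) // B.Nonempty}} {Φ : List (Formula n)} :
    Sat M s (nabla B Φ) ↔
      (∀ t, M.RB B s t → ∃ φ ∈ Φ, Sat M t φ) ∧ ∀ φ ∈ Φ, ∃ t, M.RB B s t ∧ Sat M t φ := by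
  simp [nabla, Sat, sat_bigAnd, sat_bigOr]

theorem sat_toFormula_succ {P : Finset ℕ} {m : ℕ} {d : CData n} :
    Sat M s (toFormula P (m + 1) d) ↔
      Sat M s (minterm P (d.S ∩ P)) ∧ ∀ B : Finset (Fin n), B.Nonempty →
        (∀ t, M.RB B s t → ∃ c ∈ d.succ B, Sat M t (toFormula P m c)) ∧
        ∀ c ∈ d.succ B, ∃ t, M.RB B s t ∧ Sat M t (toFormula P m c) := by
  simp only [toFormula, Sat, sat_bigAnd, List.forall_mem_map, sat_nabla]
  simp only [mem_normList, List.mem_map, exists_exists_and_eq_and, forall_exists_index, and_imp,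
    forall_apply_eq_imp_iff₂]
  exact and_congr_right fun _ =>
    ⟨fun h B hB => h ⟨B, hB⟩ (mem_neSubsets hB), fun h B _ => h B.1 B.2⟩

theorem KModel.RB_trans (hM : IsModel MSys.K45 M) {B : Finset (Fin n)} {x y z : W}
    (hxy : M.RB B x y) (hyz : M.RB B y z) : M.RB B x z :=
  fun i hi => (hM i).1 (hxy i hi) (hyz i hi)

theorem KModel.RB_euclidean (hM : IsModel MSys.K45 M) {B : Finset (Fin n)} {x y z : W}
    (hxy : M.RB B x y) (hxz : M.RB B x z) : M.RB B y z :=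
  fun i hi => (hM i).2 _ _ _ (hxy i hi) (hxz i hi)

end Semantics

section Canonical

variable {n : ℕ} {W : Type} {M : KModel n W} {P : Finset ℕ}

theorem toFormula_eq_of_sat {m : ℕ} {s : W} {d d' : CData n} (h : Sat M s (toFormula P m d))
    (h' : Sat M s (toFormula P m d')) : toFormula P m d = toFormula P m d' := by
  induction m generalizing s d d' with
  | zero =>
    show minterm P (d.S ∩ P) = minterm P (d'.S ∩ P)
    rw [eq_of_sat_minterm Finset.inter_subset_right Finset.inter_subset_right h h']
  | succ m ih =>
    have successors_subset : ∀ {e e' : CData n}, Sat M s (toFormula P (m + 1) e) →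
        Sat M s (toFormula P (m + 1) e') → ∀ (B : Finset (Fin n)), B.Nonempty →
        ∀ c ∈ e.succ B, ∃ c' ∈ e'.succ B, toFormula P m c' = toFormula P m c := by
      intro e e' he he' B hB c hc
      obtain ⟨t, hst, ht⟩ := ((sat_toFormula_succ.1 he).2 B hB).2 c hc
      obtain ⟨c', hc', ht'⟩ := ((sat_toFormula_succ.1 he').2 B hB).1 t hst
      exact ⟨c', hc', ih ht' ht⟩
    have hS := eq_of_sat_minterm Finset.inter_subset_right Finset.inter_subset_right
      (sat_toFormula_succ.1 h).1 (sat_toFormula_succ.1 h').1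
    rw [toFormula, toFormula, hS]
    congr 2
    refine List.map_congr_left fun B _ => congrArg (nabla B) (normList_congr fun ψ => ?_)
    simp only [List.mem_map]
    constructor
    · rintro ⟨c, hc, rfl⟩
      exact successors_subset h h' B.1 B.2 c hc
    · rintro ⟨c', hc', rfl⟩
      exact successors_subset h' h B.1 B.2 c' hc'

theorem sat_downD : ∀ {m : ℕ} {s : W} {d : CData n},
    Sat M s (toFormula P m d) → Sat M s (toFormula P (m - 1) (downD m d))
  | 0, _, _, h => h
  | 1, _, _, h => (sat_toFormula_succ.1 h).1
  | m + 2, _, _, h => by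
    obtain ⟨h0, h⟩ := sat_toFormula_succ.1 h
    refine sat_toFormula_succ.2 ⟨h0, fun B hB => ?_⟩
    obtain ⟨hcover, hrealize⟩ := h B hB
    simp only [downD, CData.succ, List.mem_map, exists_exists_and_eq_and, forall_exists_index,
      and_imp, forall_apply_eq_imp_iff₂]
    exact ⟨fun t hst => (hcover t hst).imp fun _ => And.imp_right sat_downD,
      fun c hc => (hrealize c hc).imp fun _ => And.imp_right sat_downD⟩

theorem sat_cfDown {m l : ℕ} {s : W} {d : CData n} (h : Sat M s (cf P m d)) :
    Sat M s (cfDown P m l d) := by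
  induction l generalizing m d with
  | zero => exact h
  | succ l ih =>
    rw [cfDown, downIter, show m - (l + 1) = m - 1 - l by omega]
    exact ih (sat_downD h)

theorem cfDown_eq_of_sat {m m' l l' : ℕ} {s : W} {d d' : CData n} (h : Sat M s (cf P m d))
    (h' : Sat M s (cf P m' d')) (hlevel : m - l = m' - l') :
    cfDown P m l d = cfDown P m' l' d' := by
  have hd : Sat M s (cfDown P m l d) := sat_cfDown h
  have hd' : Sat M s (cfDown P m' l' d') := sat_cfDown h'
  rw [cfDown, hlevel] at hd ⊢
  exact toFormula_eq_of_sat hd hd'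

end Canonical

theorem identical_successors_general {n : ℕ} (P : Finset ℕ) (k : ℕ) (hk : 2 ≤ k)
    (d : CData n) (hsat : SatL MSys.K45 (cf P k d))
    (l : ℕ) (hl1 : 1 ≤ l)
    (B : Finset (Fin n)) (hB : B.Nonempty)
    (c : CData n) (hc : c ∈ d.succ B) :
    {φ : Formula n | ∃ c' ∈ d.succ B, φ = cfDown P (k - 1) l c'} =
    {φ : Formula n | ∃ c'' ∈ c.succ B, φ = cfDown P (k - 2) (l - 1) c''} := by
  obtain ⟨m, rfl⟩ : ∃ m, k = m + 2 := ⟨k - 2, by omega⟩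
  have hlevel : m + 2 - 1 - l = m + 2 - 2 - (l - 1) := by omega
  obtain ⟨W, M, s, hM, hs⟩ := hsat
  obtain ⟨hcover, hrealize⟩ := (sat_toFormula_succ.1 hs).2 B hB
  obtain ⟨t, hst, ht⟩ := hrealize c hc
  obtain ⟨hcover', hrealize'⟩ := (sat_toFormula_succ.1 ht).2 B hB
  ext φ
  constructor
  · rintro ⟨c', hc', rfl⟩
    obtain ⟨u, hsu, hu⟩ := hrealize c' hc'
    obtain ⟨c'', hc'', hu'⟩ := hcover' u (KModel.RB_euclidean hM hst hsu)
    exact ⟨c'', hc'', cfDown_eq_of_sat hu hu' hlevel⟩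
  · rintro ⟨c'', hc'', rfl⟩
    obtain ⟨u, htu, hu'⟩ := hrealize' c'' hc''
    obtain ⟨c', hc', hu⟩ := hcover u (KModel.RB_trans hM hst htu)
    exact ⟨c', hc', cfDown_eq_of_sat hu' hu hlevel.symm⟩

/-- the identical successors property for `K45_n D`-satisfiable canonical
formulas: `R_B(δ)^{↓l} = R_B(η)^{↓(l−1)}` for every `η ∈ R_B(δ)`. -/
theorem identical_successors {n : ℕ} (P : Finset ℕ) (k : ℕ) (hk : 2 ≤ k)
    (d : CData n) (hsat : SatL MSys.K45 (cf P k d))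
    (l : ℕ) (hl1 : 1 ≤ l) (hlk : l < k)
    (B : Finset (Fin n)) (hB : B.Nonempty)
    (c : CData n) (hc : c ∈ d.succ B) :
    {φ : Formula n | ∃ c' ∈ d.succ B, φ = cfDown P (k - 1) l c'} =
    {φ : Formula n | ∃ c'' ∈ c.succ B, φ = cfDown P (k - 2) (l - 1) c''} :=
  identical_successors_general P k hk d hsat l hl1 B hB c hc

end DKLogic
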